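/- arXiv:2601.04637 — 2 statements merged into one kernel-verified Lean document; each statement's English description precedes it below -/
import Mathlib

section
/- There exists an infinite family of planar multigraphs M on n vertices with a(M) = n/4; specifically, for each k ≥ 1, the disjoint union of k copies of K₄ with every edge duplicated is a planar multigraph on n = 4k vertices with maximum induced forest of size exactly k = n/4. -/
/-! Basic theory of finite multigraphs (parallel edges allowed, no loops),
induced forests, and combinatorial plane embeddings (rotation systems of
genus zero together with a nesting of components, à la Heffter–Edmonds). -/

structure Multigraph (V : Type) where
  mult : V → V → ℕ
  symm : ∀ u v, mult u v = mult v u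
  loopless : ∀ v, mult v v = 0

namespace Multigraph

variable {V : Type}

/-- The underlying simple graph: adjacency iff at least one edge. -/
def support (M : Multigraph V) : SimpleGraph V where
  Adj u v := 0 < M.mult u v
  symm := by
    constructor
    intro u v h
    rw [M.symm]; exact h
  loopless := by
    constructor
    intro v h
    rw [M.loopless] at h; exact lt_irrefl 0 h

/-- A vertex set induces a forest in a multigraph iff no two of its vertices are
joined by parallel edges (which would form a `2`-cycle) and the induced simple
graph is acyclic. -/
def IsInducedForest (M : Multigraph V) (S : Finset V) : Prop :=
  (∀ u ∈ S, ∀ v ∈ S, M.mult u v ≤ 1) ∧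
    ((M.support.induce (S : Set V)).IsAcyclic)

/-- `a(M)`: the maximum number of vertices inducing a forest. -/
noncomputable def forestNum (M : Multigraph V) : ℕ :=
  sSup {k | ∃ S : Finset V, M.IsInducedForest S ∧ S.card = k}

/-- The number of unordered pairs of vertices joined by parallel edges. -/
noncomputable def parallelPairs (M : Multigraph V) : ℕ :=
  Nat.card {p : Sym2 V // ∃ a b, p = s(a, b) ∧ 2 ≤ M.mult a b}

/-- The induced sub-multigraph on a set of vertices. -/
def induce (M : Multigraph V) (S : Set V) : Multigraph S where
  mult u v := M.mult u v
  symm := fun u v => M.symm u v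
  loopless := fun v => M.loopless v

/-- Darts: an edge with a direction; the edges from `u` to `v` are indexed by
`Fin (M.mult u v)`. -/
def Dart (M : Multigraph V) : Type :=
  Σ p : V × V, Fin (M.mult p.1 p.2)

instance dartFinite [Finite V] (M : Multigraph V) : Finite M.Dart := by
  have : Finite (Σ p : V × V, Fin (M.mult p.1 p.2)) := by infer_instance
  exact this

/-- Reversal of a dart. -/
def dartRev (M : Multigraph V) (d : M.Dart) : M.Dart :=
  ⟨(d.1.2, d.1.1), Fin.cast (M.symm d.1.1 d.1.2) d.2⟩

lemma dartRev_involutive (M : Multigraph V) : Function.Involutive M.dartRev := by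
  rintro ⟨⟨u, v⟩, i⟩
  simp [dartRev]
  rfl

/-- Reversal of darts as a permutation. -/
def revPerm (M : Multigraph V) : Equiv.Perm M.Dart :=
  Function.Involutive.toPerm _ (M.dartRev_involutive)

/-- The number of edges (each edge yields two darts). -/
noncomputable def edgeCount (M : Multigraph V) : ℕ := Nat.card M.Dart / 2

/-- The number of connected components. -/
noncomputable def components (M : Multigraph V) : ℕ :=
  Nat.card M.support.ConnectedComponent

/-- The number of connected components containing at least one edge. -/
noncomputable def edgeComponents (M : Multigraph V) : ℕ :=
  Nat.card {c : M.support.ConnectedComponent //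
    ∃ d : M.Dart, M.support.connectedComponentMk d.1.1 = c}

/-- The setoid of belonging to the same cycle of a permutation. -/
def cycleSetoid {β : Type*} (φ : Equiv.Perm β) : Setoid β :=
  ⟨φ.SameCycle, ⟨fun x => Equiv.Perm.SameCycle.refl φ x,
    fun h => h.symm, fun h1 h2 => h1.trans h2⟩⟩

/-- The face permutation of a rotation system: first reverse a dart, then rotate. -/
def facePerm (M : Multigraph V) (rot : Equiv.Perm M.Dart) : Equiv.Perm M.Dart :=
  (M.revPerm).trans rot

/-- Combinatorial faces (per connected component): orbits of the face permutation. -/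
def Faces (M : Multigraph V) (rot : Equiv.Perm M.Dart) : Type :=
  Quotient (cycleSetoid (M.facePerm rot))

instance facesFinite [Finite V] (M : Multigraph V) (rot : Equiv.Perm M.Dart) :
    Finite (M.Faces rot) := by
  have : Finite (Quotient (cycleSetoid (M.facePerm rot))) := Quotient.finite _
  exact this

/-- Connected components that contain at least one dart. -/
def DartComp (M : Multigraph V) : Type :=
  {c : M.support.ConnectedComponent // ∃ d : M.Dart, M.support.connectedComponentMk d.1.1 = c}

/-- The component in which a combinatorial face lives. -/
noncomputable def faceDartComp (M : Multigraph V) (rot : Equiv.Perm M.Dart) :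
    M.Faces rot → M.DartComp :=
  fun F => ⟨M.support.connectedComponentMk F.out.1.1, ⟨F.out, rfl⟩⟩

/-- A plane embedding of a multigraph: a rotation system whose combined Euler
characteristic is that of genus zero on every component, together with a choice
of the outer face of every component (with darts) and a well-founded nesting of
components in faces.  By the Heffter–Edmonds principle this data is exactly the
combinatorial description of an embedding into the plane. -/
structure PlaneEmbedding (M : Multigraph V) where
  rot : Equiv.Perm M.Dart
  rot_tail : ∀ d : M.Dart, (rot d).1.1 = d.1.1
  rot_cyclic : ∀ d e : M.Dart, d.1.1 = e.1.1 → rot.SameCycle d e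
  outOrbit : M.DartComp → M.Faces rot
  outOrbit_comp : ∀ c, M.faceDartComp rot (outOrbit c) = c
  encl : M.DartComp → Option (M.Faces rot)
  depth : M.DartComp → ℕ
  encl_depth : ∀ c F, encl c = some F → depth (M.faceDartComp rot F) < depth c
  euler : Nat.card V + Nat.card (M.Faces rot)
    = M.edgeCount + M.components + M.edgeComponents

/-- `M` is planar iff it has a plane embedding. -/
def IsPlanar (M : Multigraph V) : Prop := Nonempty M.PlaneEmbedding

namespace PlaneEmbedding

variable {M : Multigraph V}

/-- The merging relation identifying the outer combinatorial face of each
component with the face it is nested in (outermost components being merged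
into the unbounded face `Sum.inl ()`). -/
def mergeRel (E : M.PlaneEmbedding) :
    (Unit ⊕ M.Faces E.rot) → (Unit ⊕ M.Faces E.rot) → Prop :=
  fun x y => ∃ c, x = Sum.inr (E.outOrbit c) ∧
    y = Option.elim (E.encl c) (Sum.inl ()) Sum.inr

/-- The faces of the plane embedding: combinatorial faces merged along the
nesting (plus the unbounded face). -/
def PlaneFaces (E : M.PlaneEmbedding) : Type := Quot E.mergeRel

/-- The number of faces of the plane embedding. -/
noncomputable def numFaces (E : M.PlaneEmbedding) : ℕ := Nat.card E.PlaneFaces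

/-- The degree of a face: the number of edge-side (= dart) incidences with it. -/
noncomputable def faceDeg (E : M.PlaneEmbedding) (Pf : E.PlaneFaces) : ℕ :=
  Nat.card {d : M.Dart //
    Quot.mk E.mergeRel (Sum.inr (Quotient.mk (cycleSetoid (M.facePerm E.rot)) d)) = Pf}

/-- The embedding has no `2`-faces. -/
def NoTwoFaces (E : M.PlaneEmbedding) : Prop := ∀ Pf : E.PlaneFaces, E.faceDeg Pf ≠ 2

end PlaneEmbedding

end Multigraph

section
open Classical

/-- The multigraph associated with a simple graph (one edge per adjacency). -/
noncomputable def SimpleGraph.toMultigraph {V : Type} (G : SimpleGraph V) : Multigraph V where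
  mult u v := if G.Adj u v then 1 else 0
  symm := by
    intro u v
    by_cases h : G.Adj u v
    · simp [h, h.symm]
    · have h2 : ¬ G.Adj v u := fun h' => h h'.symm
      simp [h, h2]
  loopless := by intro v; simp

/-- The multigraph obtained from a simple graph by duplicating every edge. -/
noncomputable def SimpleGraph.doubleMultigraph {V : Type} (G : SimpleGraph V) : Multigraph V where
  mult u v := if G.Adj u v then 2 else 0
  symm := by
    intro u v
    by_cases h : G.Adj u v
    · simp [h, h.symm]
    · have h2 : ¬ G.Adj v u := fun h' => h h'.symm
      simp [h, h2]
  loopless := by intro v; simp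

/-- An independent set in a simple graph. -/
def SimpleGraph.IsIndepFinset {V : Type} (G : SimpleGraph V) (S : Finset V) : Prop :=
  ∀ u ∈ S, ∀ v ∈ S, ¬ G.Adj u v

/-- The independence number of a simple graph. -/
noncomputable def SimpleGraph.indepNumber {V : Type} (G : SimpleGraph V) : ℕ :=
  sSup {k | ∃ S : Finset V, G.IsIndepFinset S ∧ S.card = k}

/-- The disjoint union of `k` copies of `K₄`. -/
def cliquesUnion (k : ℕ) : SimpleGraph (Fin k × Fin 4) where
  Adj u v := u.1 = v.1 ∧ u.2 ≠ v.2
  symm := by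
    constructor
    rintro u v ⟨h1, h2⟩
    exact ⟨h1.symm, h2.symm⟩
  loopless := by
    constructor
    rintro u ⟨h1, h2⟩
    exact h2 rfl

/-- Deleting one of the parallel edges between `u` and `v`. -/
noncomputable def Multigraph.deleteParallel {V : Type} (M : Multigraph V) (u v : V) :
    Multigraph V where
  mult x y := if (x = u ∧ y = v) ∨ (x = v ∧ y = u) then M.mult x y - 1 else M.mult x y
  symm := by
    intro x y
    by_cases h : (x = u ∧ y = v) ∨ (x = v ∧ y = u)
    · have h' : (y = u ∧ x = v) ∨ (y = v ∧ x = u) := by tauto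
      simp only [if_pos h, if_pos h', M.symm x y]
    · have h' : ¬((y = u ∧ x = v) ∨ (y = v ∧ x = u)) := by tauto
      simp only [if_neg h, if_neg h', M.symm x y]
  loopless := by
    intro x
    by_cases h : (x = u ∧ x = v) ∨ (x = v ∧ x = u) <;> simp [h, M.loopless x]

end

/-! An induced forest of a graph with every edge doubled spans no edge, since two parallel edges
form a `2`-cycle; so `a(M)` is the independence number of the underlying simple graph,
which for `k` disjoint copies of `K₄` is `k`. For planarity, embed each doubled `K₄` as the
tetrahedron with every edge thickened into a digon: `4` vertices, `12` edges and `4 + 6 = 10`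
faces, so Euler's formula holds copy by copy. -/

open SimpleGraph

namespace Equiv.Perm

variable {α β ι : Type*}

theorem SameCycle.eq_of_invariant {f : Perm α} {ℓ : α → β} (hℓ : ∀ x, ℓ (f x) = ℓ x)
    {x y : α} (h : f.SameCycle x y) : ℓ x = ℓ y := by
  obtain ⟨n, rfl⟩ := h
  induction n using Int.induction_on generalizing x with
  | zero => rfl
  | succ n ih => rw [zpow_add_one, mul_apply, ← ih, hℓ]
  | pred n ih =>
    rw [zpow_sub_one, mul_apply, ← ih, ← hℓ (f⁻¹ x), ← mul_apply, mul_inv_cancel, one_apply]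

theorem sameCycle_of_iterate_eq {f : Perm α} {x y : α} (n : ℕ) (h : f^[n] x = y) :
    f.SameCycle x y :=
  ⟨n, by rw [zpow_natCast, ← iterate_eq_pow, h]⟩

theorem natCard_cycles_eq_natCard_range (f : Perm α) (ℓ : α → β) (hℓ : ∀ x, ℓ (f x) = ℓ x)
    (hsep : ∀ x y, ℓ x = ℓ y → f.SameCycle x y) :
    Nat.card (Quotient (Multigraph.cycleSetoid f)) = Nat.card (Set.range ℓ) := by
  refine Nat.card_congr (Equiv.ofBijective (Quotient.lift (fun x => (⟨ℓ x, x, rfl⟩ : Set.range ℓ))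
    fun x y h => Subtype.ext (SameCycle.eq_of_invariant hℓ h)) ⟨?_, ?_⟩)
  · rintro ⟨x⟩ ⟨y⟩ h
    exact Quotient.sound (hsep x y (congrArg Subtype.val h))
  · rintro ⟨_, x, rfl⟩
    exact ⟨Quotient.mk _ x, rfl⟩

theorem sameCycle_of_fiberwise (e : α ≃ ι × β) {f : Perm α} {g : β → β}
    (hfg : ∀ x, e (f x) = ((e x).1, g (e x).2)) {x y : α} (n : ℕ)
    (h₁ : (e x).1 = (e y).1) (h₂ : g^[n] (e x).2 = (e y).2) : f.SameCycle x y := by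
  refine sameCycle_of_iterate_eq n (e.injective ?_)
  have hsemi : Function.Semiconj e f (Prod.map id g) := hfg
  rw [hsemi.iterate_right n x, Prod.map_iterate, Function.iterate_id]
  exact Prod.ext h₁ h₂

end Equiv.Perm

namespace Multigraph

variable {V : Type} {M : Multigraph V}

theorem connectedComponentMk_facePerm (rot : Equiv.Perm M.Dart)
    (rot_tail : ∀ d, (rot d).1.1 = d.1.1) (d : M.Dart) :
    M.support.connectedComponentMk (M.facePerm rot d).1.1
      = M.support.connectedComponentMk d.1.1 := by
  have hadj : M.support.Adj d.1.1 d.1.2 := d.2.pos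
  rw [facePerm, Equiv.trans_apply, rot_tail]
  exact (ConnectedComponent.connectedComponentMk_eq_of_adj hadj).symm

theorem isPlanar_of_rotation (rot : Equiv.Perm M.Dart) (rot_tail : ∀ d, (rot d).1.1 = d.1.1)
    (rot_cyclic : ∀ d e : M.Dart, d.1.1 = e.1.1 → rot.SameCycle d e)
    (euler : Nat.card V + Nat.card (M.Faces rot)
      = M.edgeCount + M.components + M.edgeComponents) :
    M.IsPlanar :=
  ⟨{ rot, rot_tail, rot_cyclic
     outOrbit := fun c => Quotient.mk _ c.2.choose
     outOrbit_comp := fun c => Subtype.ext <| by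
       have hout : (M.facePerm rot).SameCycle (Quotient.mk _ c.2.choose).out c.2.choose :=
         Quotient.mk_out (s := cycleSetoid (M.facePerm rot)) _
       exact (Equiv.Perm.SameCycle.eq_of_invariant
         (ℓ := fun d : M.Dart => M.support.connectedComponentMk d.1.1)
         (connectedComponentMk_facePerm rot rot_tail) hout).trans c.2.choose_spec
     encl := fun _ => none
     depth := fun _ => 0
     encl_depth := fun _ _ h => nomatch h
     euler }⟩

theorem edgeComponents_eq_components (h : ∀ v, ∃ w, 0 < M.mult v w) :
    M.edgeComponents = M.components :=
  Nat.card_congr <| Equiv.subtypeUnivEquiv fun c =>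
    ConnectedComponent.ind (fun v => let ⟨w, hw⟩ := h v; ⟨⟨(v, w), ⟨0, hw⟩⟩, rfl⟩) c

end Multigraph

namespace SimpleGraph

variable {V : Type} (G : SimpleGraph V)

theorem doubleMultigraph_mult_of_adj {u v : V} (h : G.Adj u v) :
    G.doubleMultigraph.mult u v = 2 :=
  if_pos h

theorem doubleMultigraph_mult_of_not_adj {u v : V} (h : ¬ G.Adj u v) :
    G.doubleMultigraph.mult u v = 0 :=
  if_neg h

@[simp]
theorem support_doubleMultigraph : G.doubleMultigraph.support = G := by
  ext u v
  change 0 < G.doubleMultigraph.mult u v ↔ G.Adj u v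
  by_cases h : G.Adj u v
  · simp [G.doubleMultigraph_mult_of_adj h, h]
  · simp [G.doubleMultigraph_mult_of_not_adj h, h]

theorem adj_of_doubleMultigraph_dart (d : G.doubleMultigraph.Dart) : G.Adj d.1.1 d.1.2 := by
  have h : G.doubleMultigraph.support.Adj d.1.1 d.1.2 := d.2.pos
  rwa [support_doubleMultigraph] at h

noncomputable def doubleMultigraphDartEquiv : G.doubleMultigraph.Dart ≃ G.Dart × Fin 2 where
  toFun d := (⟨d.1, G.adj_of_doubleMultigraph_dart d⟩,
    Fin.cast (G.doubleMultigraph_mult_of_adj (G.adj_of_doubleMultigraph_dart d)) d.2)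
  invFun x := ⟨x.1.toProd, Fin.cast (G.doubleMultigraph_mult_of_adj x.1.adj).symm x.2⟩
  left_inv _ := rfl
  right_inv _ := rfl

theorem doubleMultigraphDartEquiv_dartRev (d : G.doubleMultigraph.Dart) :
    G.doubleMultigraphDartEquiv (G.doubleMultigraph.dartRev d)
      = ((G.doubleMultigraphDartEquiv d).1.symm, (G.doubleMultigraphDartEquiv d).2) :=
  rfl

theorem isInducedForest_doubleMultigraph_iff {S : Finset V} :
    G.doubleMultigraph.IsInducedForest S ↔ G.IsIndepFinset S := by
  constructor
  · rintro ⟨hmult, -⟩ u hu v hv huv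
    have h := hmult u hu v hv
    rw [G.doubleMultigraph_mult_of_adj huv] at h
    omega
  · intro hS
    refine ⟨fun u hu v hv => by rw [G.doubleMultigraph_mult_of_not_adj (hS u hu v hv)]; omega, ?_⟩
    have hbot : G.doubleMultigraph.support.induce (S : Set V) = ⊥ := by
      ext ⟨u, hu⟩ ⟨v, hv⟩
      simpa using hS u hu v hv
    rw [hbot]
    exact isAcyclic_bot

theorem forestNum_doubleMultigraph : G.doubleMultigraph.forestNum = G.indepNumber := by
  simp only [Multigraph.forestNum, indepNumber, isInducedForest_doubleMultigraph_iff]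

end SimpleGraph

section cliquesUnion

variable (k : ℕ)

theorem indepNumber_cliquesUnion : (cliquesUnion k).indepNumber = k := by
  refine IsGreatest.csSup_eq ⟨⟨Finset.univ.image (·, 0), ?_, ?_⟩, ?_⟩
  · simp [SimpleGraph.IsIndepFinset, cliquesUnion]
  · rw [Finset.card_image_of_injective _ fun i j h => congrArg Prod.fst h, Finset.card_univ,
      Fintype.card_fin]
  · rintro _ ⟨S, hS, rfl⟩
    refine (Finset.card_le_card_of_injOn Prod.fst (fun _ _ => Finset.mem_univ _) ?_).trans_eq
      (Finset.card_fin k)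
    intro u hu v hv huv
    by_contra hne
    exact hS u hu v hv ⟨huv, fun h => hne (Prod.ext huv h)⟩

def cliquesUnionDartEquiv : (cliquesUnion k).Dart ≃ Fin k × (⊤ : SimpleGraph (Fin 4)).Dart where
  toFun δ := (δ.fst.1, ⟨(δ.fst.2, δ.snd.2), δ.adj.2⟩)
  invFun x := ⟨((x.1, x.2.fst), (x.1, x.2.snd)), rfl, x.2.adj⟩
  left_inv δ := by
    obtain ⟨⟨⟨i, a⟩, ⟨j, b⟩⟩, hij, -⟩ := δ
    obtain rfl : i = j := hij
    rfl
  right_inv _ := rfl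

theorem cliquesUnionDartEquiv_symm (δ : (cliquesUnion k).Dart) :
    cliquesUnionDartEquiv k δ.symm
      = ((cliquesUnionDartEquiv k δ).1, (cliquesUnionDartEquiv k δ).2.symm) := by
  obtain ⟨⟨⟨i, a⟩, ⟨j, b⟩⟩, hij, -⟩ := δ
  obtain rfl : i = j := hij
  rfl

theorem cliquesUnion_reachable_fst {u v : Fin k × Fin 4} (h : (cliquesUnion k).Reachable u v) :
    u.1 = v.1 := by
  obtain ⟨w⟩ := h
  induction w with
  | nil => rfl
  | cons ha _ ih => exact ha.1.trans ih

def cliquesUnionComponentEquiv : (cliquesUnion k).ConnectedComponent ≃ Fin k where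
  toFun := ConnectedComponent.lift Prod.fst fun _ _ p _ => cliquesUnion_reachable_fst k ⟨p⟩
  invFun i := (cliquesUnion k).connectedComponentMk (i, 0)
  left_inv := ConnectedComponent.ind fun ⟨i, a⟩ => by
    by_cases ha : a = 0
    · subst ha
      rfl
    · exact ConnectedComponent.sound (Adj.reachable ⟨rfl, Ne.symm ha⟩)
  right_inv _ := rfl

end cliquesUnion

namespace DoubledK4

/-- Read `Fin 4` as the Klein four-group under `^^^`. The rotation at `a` turns the direction
`a ^^^ b` through `1 → 2 → 3 → 1`, so every face of `K₄` closes up after three steps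
(`1 ^^^ 2 ^^^ 3 = 0`): the embedding is the tetrahedron. -/
def nbrSucc (a b : Fin 4) : Fin 4 := a ^^^ ((a ^^^ b) % 3 + 1)

theorem ne_nbrSucc : ∀ a b : Fin 4, a ≠ nbrSucc a b := by decide

def rotK4 (δ : (⊤ : SimpleGraph (Fin 4)).Dart) : (⊤ : SimpleGraph (Fin 4)).Dart :=
  ⟨(δ.fst, nbrSucc δ.fst δ.snd), ne_nbrSucc _ _⟩

/-- The two copies of an edge are met in opposite orders at its two ends, so that they bound
a digon. -/
def leadCopy (δ : (⊤ : SimpleGraph (Fin 4)).Dart) : Fin 2 := if δ.fst < δ.snd then 0 else 1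

abbrev Dart : Type := (⊤ : SimpleGraph (Fin 4)).Dart × Fin 2

noncomputable def rot : Equiv.Perm Dart :=
  Equiv.ofBijective
    (fun x => if x.2 = leadCopy x.1 then (x.1, x.2 + 1) else (rotK4 x.1, leadCopy (rotK4 x.1)))
    (by decide)

def rev (x : Dart) : Dart := (x.1.symm, x.2)

/-- The four triangles and the six digons have distinct vertex sets, which therefore label the
faces. -/
def faceVerts (x : Dart) : Finset (Fin 4) :=
  if x.2 = leadCopy x.1 then {x.1.fst, x.1.snd, nbrSucc x.1.snd x.1.fst} else {x.1.fst, x.1.snd}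

theorem rot_fst : ∀ x : Dart, (rot x).1.fst = x.1.fst := by decide

theorem exists_rot_iterate_eq : ∀ x y : Dart, x.1.fst = y.1.fst → ∃ n : Fin 6, rot^[n] x = y := by
  decide

theorem faceVerts_rot_rev : ∀ x : Dart, faceVerts (rot (rev x)) = faceVerts x := by decide

theorem exists_face_iterate_eq :
    ∀ x y : Dart, faceVerts x = faceVerts y → ∃ n : Fin 3, (rot ∘ rev)^[n] x = y := by
  decide

theorem natCard_range_faceVerts : Nat.card (Set.range faceVerts) = 10 := by
  rw [Nat.card_eq_card_toFinset, Set.toFinset_range]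
  decide

theorem natCard_dart : Nat.card Dart = 24 := by
  rw [Nat.card_eq_fintype_card]
  decide

end DoubledK4

section union

variable (k : ℕ)

noncomputable def doubledCliquesUnionDartEquiv :
    (cliquesUnion k).doubleMultigraph.Dart ≃ Fin k × DoubledK4.Dart :=
  (cliquesUnion k).doubleMultigraphDartEquiv.trans
    (((cliquesUnionDartEquiv k).prodCongr (Equiv.refl _)).trans (Equiv.prodAssoc _ _ _))

local notation "e" => doubledCliquesUnionDartEquiv k

theorem tail_eq_doubledCliquesUnionDartEquiv (d : (cliquesUnion k).doubleMultigraph.Dart) :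
    d.1.1 = ((e d).1, (e d).2.1.fst) :=
  rfl

theorem doubledCliquesUnionDartEquiv_dartRev (d : (cliquesUnion k).doubleMultigraph.Dart) :
    e ((cliquesUnion k).doubleMultigraph.dartRev d) = ((e d).1, DoubledK4.rev (e d).2) := by
  simp only [doubledCliquesUnionDartEquiv, Equiv.trans_apply, doubleMultigraphDartEquiv_dartRev,
    Equiv.prodCongr_apply, Prod.map_apply, cliquesUnionDartEquiv_symm]
  rfl

noncomputable def doubledCliquesUnionRot : Equiv.Perm (cliquesUnion k).doubleMultigraph.Dart :=
  (e).symm.permCongr ((Equiv.refl _).prodCongr DoubledK4.rot)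

theorem doubledCliquesUnionDartEquiv_rot (d : (cliquesUnion k).doubleMultigraph.Dart) :
    e (doubledCliquesUnionRot k d) = ((e d).1, DoubledK4.rot (e d).2) := by
  simp only [doubledCliquesUnionRot, Equiv.permCongr_apply, Equiv.symm_symm,
    Equiv.apply_symm_apply]
  rfl

theorem doubledCliquesUnionDartEquiv_facePerm (d : (cliquesUnion k).doubleMultigraph.Dart) :
    e ((cliquesUnion k).doubleMultigraph.facePerm (doubledCliquesUnionRot k) d)
      = ((e d).1, (DoubledK4.rot ∘ DoubledK4.rev) (e d).2) := by
  show e (doubledCliquesUnionRot k ((cliquesUnion k).doubleMultigraph.dartRev d)) = _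
  rw [doubledCliquesUnionDartEquiv_rot, doubledCliquesUnionDartEquiv_dartRev]
  rfl

theorem doubledCliquesUnionRot_tail (d : (cliquesUnion k).doubleMultigraph.Dart) :
    (doubledCliquesUnionRot k d).1.1 = d.1.1 := by
  rw [tail_eq_doubledCliquesUnionDartEquiv k (doubledCliquesUnionRot k d),
    doubledCliquesUnionDartEquiv_rot, DoubledK4.rot_fst]
  rfl

theorem doubledCliquesUnionRot_sameCycle (d d' : (cliquesUnion k).doubleMultigraph.Dart)
    (h : d.1.1 = d'.1.1) : (doubledCliquesUnionRot k).SameCycle d d' := by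
  rw [tail_eq_doubledCliquesUnionDartEquiv k d, tail_eq_doubledCliquesUnionDartEquiv k d',
    Prod.mk.injEq] at h
  obtain ⟨n, hn⟩ := DoubledK4.exists_rot_iterate_eq _ _ h.2
  exact Equiv.Perm.sameCycle_of_fiberwise e (doubledCliquesUnionDartEquiv_rot k) n h.1 hn

theorem natCard_faces_doubledCliquesUnionRot :
    Nat.card ((cliquesUnion k).doubleMultigraph.Faces (doubledCliquesUnionRot k)) = k * 10 := by
  have hcount := Equiv.Perm.natCard_cycles_eq_natCard_range
    ((cliquesUnion k).doubleMultigraph.facePerm (doubledCliquesUnionRot k))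
    (Prod.map id DoubledK4.faceVerts ∘ e)
    (fun d => by
      rw [Function.comp_apply, doubledCliquesUnionDartEquiv_facePerm]
      exact congrArg (Prod.mk _) (DoubledK4.faceVerts_rot_rev _))
    (fun d d' h => by
      obtain ⟨h₁, h₂⟩ := Prod.mk.inj h
      obtain ⟨n, hn⟩ := DoubledK4.exists_face_iterate_eq _ _ h₂
      exact Equiv.Perm.sameCycle_of_fiberwise e (doubledCliquesUnionDartEquiv_facePerm k) n h₁ hn)
  rw [Multigraph.Faces, hcount, (e).surjective.range_comp, Set.range_prodMap, Set.range_id,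
    Nat.card_coe_set_eq, Set.ncard_prod, Set.ncard_univ, ← Nat.card_coe_set_eq,
    DoubledK4.natCard_range_faceVerts, Nat.card_fin]

theorem euler_doubledCliquesUnionRot :
    Nat.card (Fin k × Fin 4) + Nat.card ((cliquesUnion k).doubleMultigraph.Faces
        (doubledCliquesUnionRot k))
      = (cliquesUnion k).doubleMultigraph.edgeCount + (cliquesUnion k).doubleMultigraph.components
        + (cliquesUnion k).doubleMultigraph.edgeComponents := by
  have hE : (cliquesUnion k).doubleMultigraph.edgeCount = k * 12 := by
    rw [Multigraph.edgeCount, Nat.card_congr e, Nat.card_prod, Nat.card_fin,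
      DoubledK4.natCard_dart]
    omega
  have hC : (cliquesUnion k).doubleMultigraph.components = k := by
    rw [Multigraph.components, support_doubleMultigraph,
      Nat.card_congr (cliquesUnionComponentEquiv k), Nat.card_fin]
  have hEC : (cliquesUnion k).doubleMultigraph.edgeComponents
      = (cliquesUnion k).doubleMultigraph.components :=
    Multigraph.edgeComponents_eq_components fun x => ⟨(x.1, x.2 + 1), by
      have hadj : (cliquesUnion k).Adj x (x.1, x.2 + 1) := ⟨rfl, by simp⟩
      rw [(cliquesUnion k).doubleMultigraph_mult_of_adj hadj]
      exact two_pos⟩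
  rw [natCard_faces_doubledCliquesUnionRot, hE, hEC, hC, Nat.card_prod, Nat.card_fin,
    Nat.card_fin]
  ring

end union

theorem doubled_K4_union_tight_general (k : ℕ) :
    ((cliquesUnion k).doubleMultigraph).IsPlanar ∧
      Nat.card (Fin k × Fin 4) = 4 * k ∧
      ((cliquesUnion k).doubleMultigraph).forestNum = k := by
  refine ⟨Multigraph.isPlanar_of_rotation (doubledCliquesUnionRot k)
    (doubledCliquesUnionRot_tail k) (doubledCliquesUnionRot_sameCycle k)
    (euler_doubledCliquesUnionRot k), by simp [mul_comm], ?_⟩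
  rw [forestNum_doubleMultigraph, indepNumber_cliquesUnion]

/-- for every `k ≥ 1`, the disjoint union of `k` copies of `K₄`
with every edge duplicated is a planar multigraph on `n = 4k` vertices with
maximum induced forest of size exactly `k = n / 4`. -/
theorem doubled_K4_union_tight (k : ℕ) (hk : 1 ≤ k) :
    ((cliquesUnion k).doubleMultigraph).IsPlanar ∧
      Nat.card (Fin k × Fin 4) = 4 * k ∧
      ((cliquesUnion k).doubleMultigraph).forestNum = k :=
  doubled_K4_union_tight_general k
end

section
/- If every simple planar graph on n vertices admits an acyclic proper 5-coloring, then every planar multigraph M on n vertices with k pairs of vertices joined by parallel edges satisfies a(M) ≥ (2/5)n − k/10. -/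
/-! Keep the first copy of every edge of `M` and subdivide every other parallel copy twice.
The resulting simple graph `G` is still planar: a rotation system of `M` induces one of `G` with
the same faces (a face of `M` just makes a two-dart detour along every subdivided copy) and the
same components, while each subdivided copy adds two vertices and two edges, so Euler's formula is
preserved. The old vertices induce the underlying simple graph of `M` in `G`, so an acyclic
`5`-colouring of `G` restricts to a proper colouring of it whose ten bichromatic classes induce
forests. Removing one end of every parallel pair inside a class yields an induced forest of `M`;
every vertex lies in four classes and every parallel pair in at most one, so the ten forests have
total size at least `4n - k`. -/

open Finset

namespace Equiv.Perm

variable {α β γ : Type*}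

theorem SameCycle.apply_eq_of_invariant {σ : Perm α} {x y : α} (f : α → γ)
    (hf : ∀ x, f (σ x) = f x) (h : σ.SameCycle x y) : f x = f y := by
  have hpow (i : ℤ) : ∀ x, f ((σ ^ i) x) = f x := by
    induction i using Int.induction_on with
    | zero => exact fun _ => Eq.refl _
    | succ i ih => intro x; rw [zpow_add_one, mul_apply, ih, hf]
    | pred i ih =>
      intro x
      rw [zpow_sub_one, mul_apply, ih, ← hf (σ⁻¹ x), coe_inv, apply_symm_apply]
  obtain ⟨i, rfl⟩ := h
  exact (hpow i x).symm

theorem sameCycle_permCongr (e : α ≃ β) {σ : Perm α} {x y : α} :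
    (e.permCongr σ).SameCycle (e x) (e y) ↔ σ.SameCycle x y := by
  have hpow (i : ℤ) : e.permCongr σ ^ i = e.permCongr (σ ^ i) := by
    simpa [permCongrHom_coe] using (map_zpow e.permCongrHom σ i).symm
  simp only [SameCycle, hpow, permCongr_apply, symm_apply_apply, e.apply_eq_iff_eq]

theorem SameCycle.sumCongr_inl {σ : Perm α} {x y : α} (τ : Perm β) (h : σ.SameCycle x y) :
    (sumCongr σ τ).SameCycle (Sum.inl x) (Sum.inl y) := by
  obtain ⟨i, rfl⟩ := h
  have hpow : sumCongr σ τ ^ i = sumCongrHom α β ((σ, τ) ^ i) := by rw [map_zpow]; rfl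
  exact ⟨i, by simp [hpow]⟩

section FirstReturn

variable (φ : Perm α) (ψ : Perm (α ⊕ β))

def IsFirstReturn : Prop :=
  ∀ a, ∃ k, 0 < k ∧ (ψ ^ k) (Sum.inl a) = Sum.inl (φ a) ∧
    ∀ j, 0 < j → j < k → ∃ b, (ψ ^ j) (Sum.inl a) = Sum.inr b

variable {φ ψ}

theorem IsFirstReturn.exists_pow_eq (h : IsFirstReturn φ ψ) (n : ℕ) (a : α) :
    ∃ m : ℕ, (ψ ^ m) (Sum.inl a) = Sum.inl ((φ ^ n) a) := by
  induction n generalizing a with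
  | zero => exact ⟨0, rfl⟩
  | succ n ih =>
    obtain ⟨k, -, hk, -⟩ := h a
    obtain ⟨m, hm⟩ := ih (φ a)
    exact ⟨m + k, by rw [pow_add, mul_apply, hk, hm, pow_succ, mul_apply]⟩

theorem IsFirstReturn.sameCycle_of_pow_eq (h : IsFirstReturn φ ψ) (n : ℕ) {a a' : α}
    (hn : (ψ ^ n) (Sum.inl a) = Sum.inl a') : φ.SameCycle a a' := by
  induction n using Nat.strong_induction_on generalizing a with
  | _ n ih =>
    obtain ⟨k, hk0, hk, hmid⟩ := h a
    rcases Nat.eq_zero_or_pos n with rfl | hn0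
    · exact (Sum.inl_injective hn).sameCycle φ
    by_cases hnk : n < k
    · obtain ⟨b, hb⟩ := hmid n hn0 hnk
      simp [hn] at hb
    · have hrest : (ψ ^ (n - k)) (Sum.inl (φ a)) = Sum.inl a' := by
        rw [← hk, ← mul_apply, ← pow_add, Nat.sub_add_cancel (not_lt.mp hnk), hn]
      exact sameCycle_apply_left.mp (ih (n - k) (by omega) hrest)

theorem IsFirstReturn.sameCycle_inl_iff (h : IsFirstReturn φ ψ) {a a' : α} :
    ψ.SameCycle (Sum.inl a) (Sum.inl a') ↔ φ.SameCycle a a' := by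
  constructor
  · rintro ⟨i | i, hi⟩
    · exact h.sameCycle_of_pow_eq i (by simpa using hi)
    · rw [zpow_negSucc, inv_eq_iff_eq] at hi
      exact (h.sameCycle_of_pow_eq _ hi.symm).symm
  · have hnat {a a' : α} (n : ℕ) (hn : (φ ^ n) a = a') :
        ψ.SameCycle (Sum.inl a) (Sum.inl a') := by
      obtain ⟨m, hm⟩ := h.exists_pow_eq n a
      exact ⟨m, by simpa [hn] using hm⟩
    rintro ⟨i | i, hi⟩
    · exact hnat i (by simpa using hi)
    · rw [zpow_negSucc, inv_eq_iff_eq] at hi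
      exact (hnat _ hi.symm).symm

noncomputable def IsFirstReturn.quotientEquiv (h : IsFirstReturn φ ψ)
    (hcover : ∀ b, ∃ (a : α) (m : ℕ), (ψ ^ m) (Sum.inl a) = Sum.inr b) :
    Quotient (Multigraph.cycleSetoid φ) ≃ Quotient (Multigraph.cycleSetoid ψ) :=
  Equiv.ofBijective (Quotient.map' Sum.inl fun _ _ => h.sameCycle_inl_iff.mpr) <| by
    constructor
    · rintro ⟨a⟩ ⟨a'⟩ haa'
      exact Quotient.sound (h.sameCycle_inl_iff.mp (Quotient.exact haa'))
    · rintro ⟨a | b⟩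
      · exact ⟨⟦a⟧, rfl⟩
      · obtain ⟨a, m, hm⟩ := hcover b
        exact ⟨⟦a⟧, Quotient.sound ⟨m, by simpa using hm⟩⟩

end FirstReturn

end Equiv.Perm

namespace SimpleGraph

variable {W : Type} (H : SimpleGraph W)

theorem toMultigraph_mult_pos_iff {a b : W} : 0 < H.toMultigraph.mult a b ↔ H.Adj a b := by
  classical
  by_cases hab : H.Adj a b <;> simp [toMultigraph, hab]

theorem toMultigraph_support_adj_iff {a b : W} : H.toMultigraph.support.Adj a b ↔ H.Adj a b :=
  H.toMultigraph_mult_pos_iff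

theorem toMultigraph_dart_ext {d e : H.toMultigraph.Dart} (h : d.1 = e.1) : d = e := by
  classical
  obtain ⟨p, i⟩ := d
  obtain ⟨q, j⟩ := e
  subst h
  have hle : H.toMultigraph.mult p.1 p.2 ≤ 1 := by
    simp only [toMultigraph]
    split <;> simp
  have hi : i.val < H.toMultigraph.mult p.1 p.2 := i.isLt
  have hj : j.val < H.toMultigraph.mult p.1 p.2 := j.isLt
  exact congrArg (Sigma.mk p) (Fin.ext (by omega))

def toMultigraphDartEquiv : H.toMultigraph.Dart ≃ {p : W × W // H.Adj p.1 p.2} where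
  toFun d := ⟨d.1, H.toMultigraph_mult_pos_iff.mp d.2.pos⟩
  invFun p := ⟨p.1, ⟨0, H.toMultigraph_mult_pos_iff.mpr p.2⟩⟩
  left_inv _ := H.toMultigraph_dart_ext rfl
  right_inv _ := rfl

theorem sum_card_filter_mem_edgeFinset_top {V κ : Type} [Fintype V] [Fintype κ] [DecidableEq κ]
    (c : V → κ) :
    ∑ e ∈ (⊤ : SimpleGraph κ).edgeFinset, #{v | c v ∈ e} =
      (Fintype.card κ - 1) * Fintype.card V := by
  have hdeg (v : V) :
      #{e ∈ (⊤ : SimpleGraph κ).edgeFinset | c v ∈ e} = Fintype.card κ - 1 := by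
    rw [← incidenceFinset_eq_filter, card_incidenceFinset_eq_degree, IsRegularOfDegree.top]
  calc ∑ e ∈ (⊤ : SimpleGraph κ).edgeFinset, #{v | c v ∈ e}
      = ∑ v, #{e ∈ (⊤ : SimpleGraph κ).edgeFinset | c v ∈ e} :=
        sum_card_bipartiteAbove_eq_sum_card_bipartiteBelow fun e v => c v ∈ e
    _ = (Fintype.card κ - 1) * Fintype.card V := by
        simp only [hdeg, sum_const, card_univ, smul_eq_mul, mul_comm]

end SimpleGraph

namespace Multigraph

open Sum

section PlaneEmbedding

variable {V : Type} {M : Multigraph V}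

theorem connectedComponentMk_eq_of_sameCycle_facePerm {rot : Equiv.Perm M.Dart}
    (hrot : ∀ d, (rot d).1.1 = d.1.1) {d e : M.Dart} (h : (M.facePerm rot).SameCycle d e) :
    M.support.connectedComponentMk d.1.1 = M.support.connectedComponentMk e.1.1 := by
  refine h.apply_eq_of_invariant (fun d => M.support.connectedComponentMk d.1.1) fun x => ?_
  show M.support.connectedComponentMk (rot (M.dartRev x)).1.1 = _
  rw [hrot]
  exact (SimpleGraph.ConnectedComponent.connectedComponentMk_eq_of_adj
    (show M.support.Adj x.1.1 x.1.2 from x.2.pos)).symm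

def PlaneEmbedding.transfer {W : Type} {N : Multigraph W} (E : M.PlaneEmbedding)
    (rot : Equiv.Perm N.Dart) (rot_tail : ∀ d : N.Dart, (rot d).1.1 = d.1.1)
    (rot_cyclic : ∀ d e : N.Dart, d.1.1 = e.1.1 → rot.SameCycle d e)
    (eF : M.Faces E.rot ≃ N.Faces rot) (eC : M.DartComp ≃ N.DartComp)
    (heF : ∀ F, N.faceDartComp rot (eF F) = eC (M.faceDartComp E.rot F))
    (hcomp : N.components = M.components)
    (hcard : Nat.card W + M.edgeCount = Nat.card V + N.edgeCount) : N.PlaneEmbedding where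
  rot := rot
  rot_tail := rot_tail
  rot_cyclic := rot_cyclic
  outOrbit c := eF (E.outOrbit (eC.symm c))
  outOrbit_comp c := by rw [heF, E.outOrbit_comp, Equiv.apply_symm_apply]
  encl c := (E.encl (eC.symm c)).map eF
  depth c := E.depth (eC.symm c)
  encl_depth c F h := by
    obtain ⟨F₀, hF₀, rfl⟩ := Option.map_eq_some_iff.mp h
    rw [heF, Equiv.symm_apply_apply]
    exact E.encl_depth _ _ hF₀
  euler := by
    have hF : Nat.card (N.Faces rot) = Nat.card (M.Faces E.rot) := Nat.card_congr eF.symm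
    have hC : N.edgeComponents = M.edgeComponents := Nat.card_congr eC.symm
    have := E.euler
    omega

end PlaneEmbedding

section Subdivision

open SimpleGraph (ConnectedComponent toMultigraph_support_adj_iff)

variable {V : Type} (M : Multigraph V)

/-- Darts of the parallel copies of an edge other than the first one. -/
def ExtraDart : Type := {d : M.Dart // 0 < d.2.val}

instance [Finite V] : Finite M.ExtraDart := Subtype.finite

/-- The simple graph obtained by keeping the first copy of every edge of `M` and subdividing
every other copy twice, the new vertex `inr x` sitting next to the tail of `x`. -/
def subdivideParallel : SimpleGraph (V ⊕ M.ExtraDart) where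
  Adj
    | inl u, inl v => M.support.Adj u v
    | inl u, inr x => x.1.1.1 = u
    | inr x, inl u => x.1.1.1 = u
    | inr x, inr y => x.1 = M.dartRev y.1
  symm := by
    constructor
    rintro (u | x) (v | y) h
    · exact h.symm
    · exact h
    · exact h
    · exact (congrArg M.dartRev h).trans (M.dartRev_involutive y.1) |>.symm
  loopless := by
    constructor
    rintro (u | x) h
    · exact M.support.loopless.irrefl u h
    · have hloop := x.1.2
      rw [show x.1.1.1 = x.1.1.2 from congrArg (fun d => d.1.1) h, M.loopless] at hloop
      exact hloop.elim0

def subdivInl : M.support ↪g M.subdivideParallel where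
  toFun := inl
  inj' := inl_injective
  map_rel_iff' := Iff.rfl

/-- A model of the darts of `M.subdivideParallel`: `inl d` is the dart of the subdivision
leaving the tail of `d` along `d`, `inr (x, false)` goes from `inr x` back to the tail of `x`,
and `inr (x, true)` from `inr x` to its partner `inr (dartRev x)`. -/
abbrev SubdivDart : Type := M.Dart ⊕ (M.ExtraDart × Bool)

variable {M}

theorem ExtraDart.val_pos (x : M.ExtraDart) : 0 < x.1.2.val := x.2

def ExtraDart.rev (x : M.ExtraDart) : M.ExtraDart := ⟨M.dartRev x.1, x.2⟩

theorem ExtraDart.rev_rev (x : M.ExtraDart) : x.rev.rev = x :=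
  Subtype.ext (M.dartRev_involutive x.1)

variable (M)

def SubdivDart.toAdjPair :
    M.SubdivDart →
      {p : (V ⊕ M.ExtraDart) × (V ⊕ M.ExtraDart) // M.subdivideParallel.Adj p.1 p.2}
  | inl d =>
    if h : d.2.val = 0 then ⟨(inl d.1.1, inl d.1.2), d.2.pos⟩
    else ⟨(inl d.1.1, inr ⟨d, Nat.pos_of_ne_zero h⟩), rfl⟩
  | inr (x, false) => ⟨(inr x, inl x.1.1.1), rfl⟩
  | inr (x, true) => ⟨(inr x, inr x.rev), (M.dartRev_involutive x.1).symm⟩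

def SubdivDart.ofAdjPair :
    {p : (V ⊕ M.ExtraDart) × (V ⊕ M.ExtraDart) // M.subdivideParallel.Adj p.1 p.2} →
      M.SubdivDart
  | ⟨(inl u, inl v), h⟩ => inl ⟨(u, v), ⟨0, h⟩⟩
  | ⟨(inl _, inr x), _⟩ => inl x.1
  | ⟨(inr x, inl _), _⟩ => inr (x, false)
  | ⟨(inr x, inr _), _⟩ => inr (x, true)

def subdivDartEquiv : M.SubdivDart ≃ M.subdivideParallel.toMultigraph.Dart :=
  (Equiv.mk (SubdivDart.toAdjPair M) (SubdivDart.ofAdjPair M)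
    (by
      rintro (d | ⟨x, _ | _⟩)
      · by_cases h : d.2.val = 0
        · simp only [SubdivDart.toAdjPair, dif_pos h, SubdivDart.ofAdjPair]
          exact congrArg inl (congrArg (Sigma.mk _) (Fin.ext h.symm))
        · simp only [SubdivDart.toAdjPair, dif_neg h, SubdivDart.ofAdjPair]
      all_goals rfl)
    (by
      rintro ⟨⟨u | x, v | y⟩, h⟩
      · rfl
      · obtain rfl : y.1.1.1 = u := h
        simp [SubdivDart.ofAdjPair, SubdivDart.toAdjPair, y.val_pos.ne']
        rfl
      · obtain rfl : x.1.1.1 = v := h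
        rfl
      · obtain rfl : y = x.rev := Subtype.ext ((congrArg M.dartRev h).trans
          (M.dartRev_involutive y.1)).symm
        rfl)).trans
  (SimpleGraph.toMultigraphDartEquiv _).symm

theorem subdivDartEquiv_fst (z : M.SubdivDart) :
    (M.subdivDartEquiv z).1 = (SubdivDart.toAdjPair M z).1 :=
  rfl

theorem subdivDartEquiv_inl_tail (d : M.Dart) : (M.subdivDartEquiv (inl d)).1.1 = inl d.1.1 := by
  rw [subdivDartEquiv_fst]
  by_cases h : d.2.val = 0 <;> simp [SubdivDart.toAdjPair, h]

theorem subdivDartEquiv_inr_tail (x : M.ExtraDart) (s : Bool) :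
    (M.subdivDartEquiv (inr (x, s))).1.1 = inr x := by
  cases s <;> rfl

def SubdivDart.rev : M.SubdivDart → M.SubdivDart
  | inl d =>
    if h : d.2.val = 0 then inl (M.dartRev d) else inr (⟨d, Nat.pos_of_ne_zero h⟩, false)
  | inr (x, false) => inl x.1
  | inr (x, true) => inr (x.rev, true)

theorem dartRev_subdivDartEquiv (z : M.SubdivDart) :
    M.subdivideParallel.toMultigraph.dartRev (M.subdivDartEquiv z) =
      M.subdivDartEquiv (SubdivDart.rev M z) := by
  apply SimpleGraph.toMultigraph_dart_ext
  show ((M.subdivDartEquiv z).1.2, (M.subdivDartEquiv z).1.1) = (M.subdivDartEquiv _).1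
  simp only [subdivDartEquiv_fst]
  rcases z with d | ⟨x, _ | _⟩
  · by_cases h : d.2.val = 0
    · have h' : (M.dartRev d).2.val = 0 := h
      simp only [SubdivDart.toAdjPair, SubdivDart.rev, dif_pos h, dif_pos h']
      rfl
    · simp only [SubdivDart.toAdjPair, SubdivDart.rev, dif_neg h]
  · simp only [SubdivDart.toAdjPair, SubdivDart.rev, dif_neg x.val_pos.ne']
    rfl
  · simp only [SubdivDart.toAdjPair, SubdivDart.rev, ExtraDart.rev_rev]

def subdivProj : V ⊕ M.ExtraDart → V
  | inl u => u
  | inr x => x.1.1.1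

theorem connectedComponentMk_subdivProj_eq {v w : V ⊕ M.ExtraDart}
    (h : M.subdivideParallel.toMultigraph.support.Adj v w) :
    M.support.connectedComponentMk (M.subdivProj v) =
      M.support.connectedComponentMk (M.subdivProj w) := by
  rw [toMultigraph_support_adj_iff] at h
  rcases v with u | x <;> rcases w with u' | y
  · exact ConnectedComponent.connectedComponentMk_eq_of_adj h
  · exact congrArg _ (show y.1.1.1 = u from h).symm
  · exact congrArg _ (show x.1.1.1 = u' from h)
  · have hx : x.1 = M.dartRev y.1 := h
    show M.support.connectedComponentMk x.1.1.1 = M.support.connectedComponentMk y.1.1.1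
    rw [hx]
    exact ConnectedComponent.connectedComponentMk_eq_of_adj (M.dartRev y.1).2.pos

theorem connectedComponentMk_inr (x : M.ExtraDart) :
    M.subdivideParallel.toMultigraph.support.connectedComponentMk (inr x) =
      M.subdivideParallel.toMultigraph.support.connectedComponentMk (inl x.1.1.1) :=
  (ConnectedComponent.connectedComponentMk_eq_of_adj
    ((toMultigraph_support_adj_iff _).mpr rfl)).symm

noncomputable def subdivComponentEquiv :
    M.support.ConnectedComponent ≃
      M.subdivideParallel.toMultigraph.support.ConnectedComponent where
  toFun := ConnectedComponent.map ⟨inl, (toMultigraph_support_adj_iff _).mpr⟩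
  invFun := ConnectedComponent.lift (fun w => M.support.connectedComponentMk (M.subdivProj w))
    fun v w p _ => by
      clear ‹p.IsPath›
      induction p with
      | nil => rfl
      | cons h _ ih => exact (M.connectedComponentMk_subdivProj_eq h).trans ih
  left_inv c := c.ind fun _ => rfl
  right_inv c := c.ind fun
    | inl _ => rfl
    | inr x => (M.connectedComponentMk_inr x).symm

theorem subdivComponentEquiv_mk (u : V) :
    M.subdivComponentEquiv (M.support.connectedComponentMk u) =
      M.subdivideParallel.toMultigraph.support.connectedComponentMk (inl u) :=
  rfl

noncomputable def subdivDartCompEquiv : M.DartComp ≃ M.subdivideParallel.toMultigraph.DartComp :=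
  Equiv.subtypeEquiv M.subdivComponentEquiv fun c => by
    constructor
    · rintro ⟨d, rfl⟩
      exact ⟨M.subdivDartEquiv (inl d), by rw [subdivDartEquiv_inl_tail]; rfl⟩
    · rintro ⟨y, hy⟩
      obtain ⟨d | ⟨x, s⟩, rfl⟩ := M.subdivDartEquiv.surjective y
      · rw [subdivDartEquiv_inl_tail, ← subdivComponentEquiv_mk] at hy
        exact ⟨d, M.subdivComponentEquiv.injective hy⟩
      · rw [subdivDartEquiv_inr_tail, connectedComponentMk_inr, ← subdivComponentEquiv_mk] at hy
        exact ⟨x.1, M.subdivComponentEquiv.injective hy⟩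

section Rotation

variable (rot : Equiv.Perm M.Dart)

def subdivRot : Equiv.Perm M.SubdivDart :=
  Equiv.sumCongr rot (Equiv.prodCongr (Equiv.refl _) Equiv.boolNot)

def subdivideParallelRot : Equiv.Perm M.subdivideParallel.toMultigraph.Dart :=
  M.subdivDartEquiv.permCongr (M.subdivRot rot)

noncomputable def subdivFacePerm : Equiv.Perm M.SubdivDart :=
  M.subdivDartEquiv.symm.permCongr
    (M.subdivideParallel.toMultigraph.facePerm (M.subdivideParallelRot rot))

theorem subdivFacePerm_apply (z : M.SubdivDart) :
    M.subdivFacePerm rot z = M.subdivRot rot (SubdivDart.rev M z) := by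
  simp [subdivFacePerm, facePerm, subdivideParallelRot, revPerm, dartRev_subdivDartEquiv]

theorem subdivFacePerm_inl_of_eq_zero {d : M.Dart} (h : d.2.val = 0) :
    M.subdivFacePerm rot (inl d) = inl (M.facePerm rot d) := by
  rw [subdivFacePerm_apply]
  simp only [SubdivDart.rev, dif_pos h]
  rfl

theorem subdivFacePerm_inl_val (x : M.ExtraDart) :
    M.subdivFacePerm rot (inl x.1) = inr (x, true) := by
  rw [subdivFacePerm_apply]
  simp only [SubdivDart.rev, dif_neg x.val_pos.ne']
  rfl

theorem subdivFacePerm_inr_true (x : M.ExtraDart) :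
    M.subdivFacePerm rot (inr (x, true)) = inr (x.rev, false) := by
  rw [subdivFacePerm_apply]
  rfl

theorem subdivFacePerm_inr_false (x : M.ExtraDart) :
    M.subdivFacePerm rot (inr (x, false)) = inl (rot x.1) := by
  rw [subdivFacePerm_apply]
  rfl

/-- A face of `M` is traversed in the subdivision with the detour `inl d, inr (d, true),
inr (d.rev, false)` along every extra dart `d`. -/
theorem isFirstReturn_subdivFacePerm :
    Equiv.Perm.IsFirstReturn (M.facePerm rot) (M.subdivFacePerm rot) := by
  intro d
  by_cases h : d.2.val = 0
  · refine ⟨1, one_pos, ?_, fun j hj1 hj2 => by omega⟩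
    rw [pow_one, subdivFacePerm_inl_of_eq_zero M rot h]
  · obtain ⟨x, rfl⟩ : ∃ x : M.ExtraDart, x.1 = d := ⟨⟨d, Nat.pos_of_ne_zero h⟩, rfl⟩
    refine ⟨3, by norm_num, ?_, fun j hj1 hj2 => ?_⟩
    · simp only [pow_succ, pow_zero, one_mul, Equiv.Perm.mul_apply, subdivFacePerm_inl_val,
        subdivFacePerm_inr_true, subdivFacePerm_inr_false]
      rfl
    · interval_cases j <;> simp [pow_succ, subdivFacePerm_inl_val, subdivFacePerm_inr_true]

theorem exists_subdivFacePerm_pow_eq_inr (b : M.ExtraDart × Bool) :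
    ∃ (d : M.Dart) (m : ℕ), (M.subdivFacePerm rot ^ m) (inl d) = inr b := by
  obtain ⟨x, _ | _⟩ := b
  · refine ⟨x.rev.1, 2, ?_⟩
    simp [pow_succ, subdivFacePerm_inl_val, subdivFacePerm_inr_true, ExtraDart.rev_rev]
  · exact ⟨x.1, 1, by simp [subdivFacePerm_inl_val]⟩

noncomputable def subdivFacesEquiv :
    M.Faces rot ≃ M.subdivideParallel.toMultigraph.Faces (M.subdivideParallelRot rot) :=
  ((isFirstReturn_subdivFacePerm M rot).quotientEquiv
      (exists_subdivFacePerm_pow_eq_inr M rot)).trans <|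
    Quotient.congr M.subdivDartEquiv fun a b => by
      have := Equiv.Perm.sameCycle_permCongr M.subdivDartEquiv.symm
        (σ := M.subdivideParallel.toMultigraph.facePerm (M.subdivideParallelRot rot))
        (x := M.subdivDartEquiv a) (y := M.subdivDartEquiv b)
      simp only [Equiv.symm_apply_apply] at this
      exact this

theorem subdivideParallelRot_apply (z : M.SubdivDart) :
    M.subdivideParallelRot rot (M.subdivDartEquiv z) = M.subdivDartEquiv (M.subdivRot rot z) := by
  simp [subdivideParallelRot]

theorem subdivideParallelRot_tail (hrot : ∀ d, (rot d).1.1 = d.1.1)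
    (y : M.subdivideParallel.toMultigraph.Dart) :
    (M.subdivideParallelRot rot y).1.1 = y.1.1 := by
  obtain ⟨z, rfl⟩ := M.subdivDartEquiv.surjective y
  rw [subdivideParallelRot_apply]
  rcases z with d | ⟨x, s⟩
  · simp only [subdivRot, Equiv.sumCongr_apply, Sum.map_inl, subdivDartEquiv_inl_tail, hrot]
  · exact (M.subdivDartEquiv_inr_tail x _).trans (M.subdivDartEquiv_inr_tail x s).symm

theorem subdivideParallelRot_sameCycle
    (hrot : ∀ d e : M.Dart, d.1.1 = e.1.1 → rot.SameCycle d e)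
    (y₁ y₂ : M.subdivideParallel.toMultigraph.Dart) (h : y₁.1.1 = y₂.1.1) :
    (M.subdivideParallelRot rot).SameCycle y₁ y₂ := by
  obtain ⟨z₁, rfl⟩ := M.subdivDartEquiv.surjective y₁
  obtain ⟨z₂, rfl⟩ := M.subdivDartEquiv.surjective y₂
  refine (Equiv.Perm.sameCycle_permCongr _).mpr ?_
  rcases z₁ with d₁ | ⟨x₁, s₁⟩ <;> rcases z₂ with d₂ | ⟨x₂, s₂⟩ <;>
    simp only [subdivDartEquiv_inl_tail, subdivDartEquiv_inr_tail, reduceCtorEq, inl.injEq,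
      inr.injEq] at h
  · exact (hrot d₁ d₂ h).sumCongr_inl _
  · subst h
    cases s₁ <;> cases s₂
    all_goals first
      | exact Equiv.Perm.SameCycle.refl _ _
      | exact ⟨1, rfl⟩

end Rotation

theorem faceDartComp_subdivFacesEquiv {rot : Equiv.Perm M.Dart} (hrot : ∀ d, (rot d).1.1 = d.1.1)
    (F : M.Faces rot) :
    M.subdivideParallel.toMultigraph.faceDartComp _ (M.subdivFacesEquiv rot F) =
      M.subdivDartCompEquiv (M.faceDartComp rot F) := by
  apply Subtype.ext
  show M.subdivideParallel.toMultigraph.support.connectedComponentMk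
      (M.subdivFacesEquiv rot F).out.1.1 = M.subdivComponentEquiv _
  have hF : M.subdivFacesEquiv rot F = Quotient.mk _ (M.subdivDartEquiv (inl F.out)) := by
    conv_lhs => rw [← Quotient.out_eq F]
    rfl
  have hout : (M.subdivideParallel.toMultigraph.facePerm (M.subdivideParallelRot rot)).SameCycle
      (M.subdivFacesEquiv rot F).out (M.subdivDartEquiv (inl F.out)) := by
    rw [hF]
    exact Quotient.mk_out (s := cycleSetoid _) _
  rw [connectedComponentMk_eq_of_sameCycle_facePerm (M.subdivideParallelRot_tail rot hrot) hout,
    subdivDartEquiv_inl_tail]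
  rfl

theorem edgeCount_subdivideParallel [Finite V] :
    M.subdivideParallel.toMultigraph.edgeCount = M.edgeCount + Nat.card M.ExtraDart := by
  have hdarts : Nat.card M.subdivideParallel.toMultigraph.Dart =
      Nat.card M.Dart + Nat.card M.ExtraDart * 2 := by
    rw [← Nat.card_congr M.subdivDartEquiv, Nat.card_sum, Nat.card_prod,
      Nat.card_eq_fintype_card (α := Bool), Fintype.card_bool]
  rw [edgeCount, edgeCount, hdarts, Nat.add_mul_div_right _ _ two_pos]

theorem IsPlanar.subdivideParallel [Finite V] {M : Multigraph V} (hM : M.IsPlanar) :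
    M.subdivideParallel.toMultigraph.IsPlanar := by
  obtain ⟨E⟩ := hM
  exact ⟨E.transfer (M.subdivideParallelRot E.rot) (M.subdivideParallelRot_tail E.rot E.rot_tail)
    (M.subdivideParallelRot_sameCycle E.rot E.rot_cyclic) (M.subdivFacesEquiv E.rot)
    M.subdivDartCompEquiv (M.faceDartComp_subdivFacesEquiv E.rot_tail)
    (Nat.card_congr M.subdivComponentEquiv.symm)
    (by rw [edgeCount_subdivideParallel, Nat.card_sum]; ring)⟩

end Subdivision

section Counting

variable {V : Type} [Fintype V] (M : Multigraph V)

theorem card_le_forestNum {S : Finset V} (hS : M.IsInducedForest S) : #S ≤ M.forestNum :=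
  le_csSup ⟨Fintype.card V, by rintro _ ⟨T, -, rfl⟩; exact T.card_le_univ⟩ ⟨S, hS, rfl⟩

open Classical in
noncomputable def parallelPairFinset : Finset (Sym2 V) :=
  {p | ∃ a b, p = s(a, b) ∧ 2 ≤ M.mult a b}

theorem card_parallelPairFinset : #M.parallelPairFinset = M.parallelPairs := by
  classical
  rw [parallelPairs, Nat.card_eq_fintype_card, Fintype.card_subtype, parallelPairFinset]

theorem mk_mem_parallelPairFinset_iff {a b : V} :
    s(a, b) ∈ M.parallelPairFinset ↔ 2 ≤ M.mult a b := by
  simp only [parallelPairFinset, mem_filter, mem_univ, true_and]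
  constructor
  · rintro ⟨a', b', h, hm⟩
    rcases Sym2.eq_iff.mp h with ⟨rfl, rfl⟩ | ⟨rfl, rfl⟩
    · exact hm
    · rwa [M.symm]
  · exact fun h => ⟨a, b, rfl, h⟩

variable [DecidableEq V] {κ : Type} [DecidableEq κ]

/-- Deleting one end of every parallel pair inside an acyclic set leaves an induced forest. -/
theorem card_le_forestNum_add (S : Finset V) (hS : (M.support.induce (S : Set V)).IsAcyclic) :
    #S ≤ M.forestNum + #(M.parallelPairFinset ∩ S.sym2) := by
  set B := M.parallelPairFinset ∩ S.sym2
  set T := S \ B.image fun p => p.out.1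
  have hT : M.IsInducedForest T := by
    refine ⟨fun u hu v hv => ?_, hS.embedding (SimpleGraph.induceHomOfLE _ ?_)⟩
    · by_contra! hm
      have hB : s(u, v) ∈ B := by
        rw [mem_inter, M.mk_mem_parallelPairFinset_iff, mk_mem_sym2_iff]
        exact ⟨hm, (mem_sdiff.mp hu).1, (mem_sdiff.mp hv).1⟩
      have hpick := mem_image_of_mem (fun p : Sym2 V => p.out.1) hB
      rcases Sym2.mem_iff.mp (Sym2.out_fst_mem s(u, v)) with h | h
      · exact (mem_sdiff.mp hu).2 (h ▸ hpick)
      · exact (mem_sdiff.mp hv).2 (h ▸ hpick)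
    · exact coe_subset.mpr sdiff_subset
  calc #S ≤ #T + #(B.image fun p => p.out.1) := card_le_card_sdiff_add_card
    _ ≤ M.forestNum + #B := add_le_add (M.card_le_forestNum hT) card_image_le

/-- A parallel pair lies in exactly one bichromatic class of a proper colouring. -/
theorem sum_card_parallelPairFinset_inter_le (c : V → κ)
    (hc : ∀ u v, M.support.Adj u v → c u ≠ c v) (E : Finset (Sym2 κ)) :
    ∑ e ∈ E, #(M.parallelPairFinset ∩ ({v | c v ∈ e} : Finset V).sym2) ≤
      #M.parallelPairFinset := by
  have hone (p) (hp : p ∈ M.parallelPairFinset) :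
      #{e ∈ E | p ∈ ({v | c v ∈ e} : Finset V).sym2} ≤ 1 := by
    induction p using Sym2.ind with
    | _ u v =>
    have hne : c u ≠ c v := hc u v <| by
      have := M.mk_mem_parallelPairFinset_iff.mp hp
      show 0 < M.mult u v
      omega
    refine card_le_one.mpr fun e₁ he₁ e₂ he₂ => ?_
    simp only [mem_filter, mk_mem_sym2_iff, mem_univ, true_and, Sym2.mem_and_mem_iff hne]
      at he₁ he₂
    rw [he₁.2, he₂.2]
  calc ∑ e ∈ E, #(M.parallelPairFinset ∩ ({v | c v ∈ e} : Finset V).sym2)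
      = ∑ p ∈ M.parallelPairFinset, #{e ∈ E | p ∈ ({v | c v ∈ e} : Finset V).sym2} := by
        simp_rw [← filter_mem_eq_inter]
        exact sum_card_bipartiteAbove_eq_sum_card_bipartiteBelow _
    _ ≤ ∑ _p ∈ M.parallelPairFinset, 1 := sum_le_sum hone
    _ = #M.parallelPairFinset := by rw [sum_const, smul_eq_mul, mul_one]

theorem card_mul_le_choose_mul_forestNum_add [Fintype κ] (c : V → κ)
    (hc : ∀ u v, M.support.Adj u v → c u ≠ c v)
    (hacyc : ∀ i j, (M.support.induce {v | c v = i ∨ c v = j}).IsAcyclic) :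
    (Fintype.card κ - 1) * Fintype.card V ≤
      (Fintype.card κ).choose 2 * M.forestNum + M.parallelPairs := by
  have hclass (e : Sym2 κ) :
      (M.support.induce (({v | c v ∈ e} : Finset V) : Set V)).IsAcyclic := by
    induction e using Sym2.ind with
    | _ i j =>
      have hset : (({v | c v ∈ s(i, j)} : Finset V) : Set V) = {v | c v = i ∨ c v = j} := by
        ext; simp [Sym2.mem_iff]
      rw [hset]
      exact hacyc i j
  calc (Fintype.card κ - 1) * Fintype.card V
      = ∑ e ∈ (⊤ : SimpleGraph κ).edgeFinset, #{v | c v ∈ e} :=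
        (SimpleGraph.sum_card_filter_mem_edgeFinset_top c).symm
    _ ≤ ∑ e ∈ (⊤ : SimpleGraph κ).edgeFinset,
          (M.forestNum + #(M.parallelPairFinset ∩ ({v | c v ∈ e} : Finset V).sym2)) :=
        sum_le_sum fun e _ => M.card_le_forestNum_add _ (hclass e)
    _ ≤ (Fintype.card κ).choose 2 * M.forestNum + M.parallelPairs := by
        rw [sum_add_distrib, sum_const, smul_eq_mul,
          SimpleGraph.card_edgeFinset_top_eq_card_choose_two, ← card_parallelPairFinset]
        gcongr
        exact M.sum_card_parallelPairFinset_inter_le c hc _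

end Counting

end Multigraph

/-- if every simple planar graph admits an acyclic proper
`5`-coloring, then every planar multigraph `M` on `n` vertices with `k` parallel
pairs satisfies `a(M) ≥ (2/5) n - k / 10`. -/
theorem forestNum_ge_of_acyclic_coloring
    (h5 : ∀ (W : Type) [Fintype W] (G : SimpleGraph W), G.toMultigraph.IsPlanar →
      ∃ C : W → Fin 5, (∀ u v, G.Adj u v → C u ≠ C v) ∧
        ∀ i j : Fin 5, (G.induce {v | C v = i ∨ C v = j}).IsAcyclic)
    {V : Type} [Fintype V] (M : Multigraph V) (hM : M.IsPlanar) :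
    (2 / 5 : ℚ) * Nat.card V - (M.parallelPairs : ℚ) / 10 ≤ M.forestNum := by
  classical
  have := Fintype.ofFinite M.ExtraDart
  obtain ⟨C, hC, hCacyc⟩ := h5 _ M.subdivideParallel hM.subdivideParallel
  have key := M.card_mul_le_choose_mul_forestNum_add (C ∘ Sum.inl) (fun u v h => hC _ _ h)
    fun i j => (hCacyc i j).comap (SimpleGraph.induceHom M.subdivInl.toHom fun _ => id)
      (SimpleGraph.induceHom_injective _ _ M.subdivInl.injective.injOn)
  rw [Fintype.card_fin] at key
  have hQ : (4 * Nat.card V : ℚ) ≤ 10 * M.forestNum + M.parallelPairs := by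
    rw [Nat.card_eq_fintype_card]
    exact_mod_cast key
  linarith
end
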